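/- For every n ≥ 0, there exists a unique binary operation ∘ on {1, …, 2^n} satisfying (x ∘ y) *_n z = x *_n (y *_n z) for all x, y, z in {1, …, 2^n}, namely the operation ∘_n defined by p ∘_n q = p *_n (q + 1) − 1 for q < 2^n and p ∘_n 2^n = p. The operation ∘_n is associative, and 2^n is a two-sided neutral element for it. -/

import Mathlib

/-- `op` is the Laver table operation on `{1, …, 2^n}`: it maps the set to itself,
satisfies `x * 1 = x + 1` for `x < 2^n`, `2^n * 1 = 1`, and
`x * (y * 1) = (x * y) * (x * 1)`. -/
def IsLaverOp (n : ℕ) (op : ℕ → ℕ → ℕ) : Prop :=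
  (∀ x y, 1 ≤ x → x ≤ 2 ^ n → 1 ≤ y → y ≤ 2 ^ n → 1 ≤ op x y ∧ op x y ≤ 2 ^ n) ∧
  (∀ x, 1 ≤ x → x < 2 ^ n → op x 1 = x + 1) ∧
  (op (2 ^ n) 1 = 1) ∧
  (∀ x y, 1 ≤ x → x ≤ 2 ^ n → 1 ≤ y → y ≤ 2 ^ n → op x (op y 1) = op (op x y) (op x 1))

/-!
In `A_n` the element `2^n` is a left identity and `x < x * y` whenever `x < 2^n`. Both facts,
and left self-distributivity `x * (y * z) = (x * y) * (x * z)`, follow by induction upward in the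
right argument and downward in the left ones, the defining identity driving each step.

Since `x ↦ x * 1` is injective, the identity `(x ∘ y) * 1 = x * (y * 1)` alone determines
`x ∘ y`: for `y < 2^n` it is the predecessor of `x * (y + 1)`. Any operation satisfying
`(x ∘ y) * z = x * (y * z)` is therefore unique, and associative because both bracketings act
as `z ↦ x * (y * (z * 1))` on `1`. Conversely, for this `∘` self-distributivity propagates
`(x ∘ y) * z = x * (y * z)` from `z = 1` to every `z`.
-/

section CompositionOfInjective

variable {α : Type*} {S : Set α} {op comp comp' : α → α → α} {e : α}

theorem comp_eq_of_injOn_op (hinj : S.InjOn (op · e)) (he : e ∈ S)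
    (hmem : ∀ x ∈ S, ∀ y ∈ S, comp x y ∈ S) (hmem' : ∀ x ∈ S, ∀ y ∈ S, comp' x y ∈ S)
    (hop : ∀ x ∈ S, ∀ y ∈ S, ∀ z ∈ S, op (comp x y) z = op x (op y z))
    (hop' : ∀ x ∈ S, ∀ y ∈ S, ∀ z ∈ S, op (comp' x y) z = op x (op y z))
    {x y : α} (hx : x ∈ S) (hy : y ∈ S) : comp x y = comp' x y :=
  hinj (hmem x hx y hy) (hmem' x hx y hy) ((hop x hx y hy e he).trans (hop' x hx y hy e he).symm)

theorem comp_assoc_of_injOn_op (hinj : S.InjOn (op · e)) (he : e ∈ S)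
    (hope : ∀ z ∈ S, op z e ∈ S) (hmem : ∀ x ∈ S, ∀ y ∈ S, comp x y ∈ S)
    (hop : ∀ x ∈ S, ∀ y ∈ S, ∀ z ∈ S, op (comp x y) z = op x (op y z))
    {x y z : α} (hx : x ∈ S) (hy : y ∈ S) (hz : z ∈ S) :
    comp (comp x y) z = comp x (comp y z) := by
  have hxy := hmem x hx y hy
  have hyz := hmem y hy z hz
  apply hinj (hmem _ hxy z hz) (hmem x hx _ hyz)
  calc op (comp (comp x y) z) e = op x (op y (op z e)) := by
        rw [hop _ hxy z hz e he, hop x hx y hy _ (hope z hz)]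
    _ = op (comp x (comp y z)) e := by
        rw [hop x hx _ hyz e he, hop y hy z hz e he]

end CompositionOfInjective

namespace IsLaverOp

variable {n : ℕ} {op : ℕ → ℕ → ℕ} {x y : ℕ}

theorem mem (h : IsLaverOp n op) (hx1 : 1 ≤ x) (hx : x ≤ 2 ^ n) (hy1 : 1 ≤ y) (hy : y ≤ 2 ^ n) :
    1 ≤ op x y ∧ op x y ≤ 2 ^ n :=
  h.1 x y hx1 hx hy1 hy

theorem op_one (h : IsLaverOp n op) (hx1 : 1 ≤ x) (hx : x < 2 ^ n) : op x 1 = x + 1 :=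
  h.2.1 x hx1 hx

theorem top_op_one (h : IsLaverOp n op) : op (2 ^ n) 1 = 1 :=
  h.2.2.1

theorem op_op_one (h : IsLaverOp n op) (hx1 : 1 ≤ x) (hx : x ≤ 2 ^ n) (hy1 : 1 ≤ y)
    (hy : y ≤ 2 ^ n) : op x (op y 1) = op (op x y) (op x 1) :=
  h.2.2.2 x y hx1 hx hy1 hy

theorem op_succ (h : IsLaverOp n op) (hx1 : 1 ≤ x) (hx : x ≤ 2 ^ n) (hy1 : 1 ≤ y)
    (hy : y < 2 ^ n) : op x (y + 1) = op (op x y) (op x 1) := by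
  rw [← h.op_one hy1 hy, h.op_op_one hx1 hx hy1 hy.le]

theorem top_op (h : IsLaverOp n op) (hy1 : 1 ≤ y) (hy : y ≤ 2 ^ n) : op (2 ^ n) y = y := by
  induction y, hy1 using Nat.le_induction with
  | base => exact h.top_op_one
  | succ y hy1 ih =>
    rw [h.op_succ Nat.one_le_two_pow le_rfl hy1 (by omega), ih (by omega), h.top_op_one,
      h.op_one hy1 (by omega)]

theorem lt_op (h : IsLaverOp n op) {x y : ℕ} (hx1 : 1 ≤ x) (hx : x < 2 ^ n) (hy1 : 1 ≤ y)
    (hy : y ≤ 2 ^ n) : x < op x y := by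
  induction y, hy1 using Nat.le_induction with
  | base => rw [h.op_one hx1 hx]; omega
  | succ y hy1 ih =>
    have hxy : x < op x y := ih (by omega)
    have hmem := h.mem hx1 hx.le hy1 (by omega)
    rw [h.op_succ hx1 hx.le hy1 (by omega), h.op_one hx1 hx]
    rcases hmem.2.eq_or_lt with htop | hlt
    · rw [htop, h.top_op (by omega) (by omega)]; omega
    · have := h.lt_op hmem.1 hlt (y := x + 1) (by omega) (by omega)
      omega
termination_by 2 ^ n - x

theorem one_lt_op (h : IsLaverOp n op) (hx1 : 1 ≤ x) (hx : x ≤ 2 ^ n) (hy1 : 1 < y)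
    (hy : y ≤ 2 ^ n) : 1 < op x y := by
  rcases hx.eq_or_lt with rfl | hx
  · rwa [h.top_op hy1.le hy]
  · have := h.lt_op hx1 hx hy1.le hy
    omega

theorem op_top (h : IsLaverOp n op) (hx1 : 1 ≤ x) (hx : x ≤ 2 ^ n) : op x (2 ^ n) = 2 ^ n := by
  rcases hx.eq_or_lt with rfl | hx
  · exact h.top_op Nat.one_le_two_pow le_rfl
  by_contra hne
  have hmem := h.mem hx1 hx.le Nat.one_le_two_pow le_rfl
  have hlt := h.lt_op hx1 hx Nat.one_le_two_pow le_rfl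
  -- `x * 1 = (x * 2^n) * (x * 1)`, impossible when `x < x * 2^n < 2^n`
  have key := h.op_op_one hx1 hx.le Nat.one_le_two_pow le_rfl
  rw [h.top_op_one, h.op_one hx1 hx] at key
  have := h.lt_op hmem.1 (lt_of_le_of_ne hmem.2 hne) (y := x + 1) (by omega) (by omega)
  omega

theorem self_distrib (h : IsLaverOp n op) {x y z : ℕ} (hx1 : 1 ≤ x) (hx : x ≤ 2 ^ n) (hy1 : 1 ≤ y)
    (hy : y ≤ 2 ^ n) (hz1 : 1 ≤ z) (hz : z ≤ 2 ^ n) :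
    op x (op y z) = op (op x y) (op x z) := by
  rcases hx.eq_or_lt with rfl | hxN
  · have hyz := h.mem hy1 hy hz1 hz
    rw [h.top_op hy1 hy, h.top_op hz1 hz, h.top_op hyz.1 hyz.2]
  rcases hy.eq_or_lt with rfl | hyN
  · have hxz := h.mem hx1 hx hz1 hz
    rw [h.top_op hz1 hz, h.op_top hx1 hx, h.top_op hxz.1 hxz.2]
  have hxy := h.mem hx1 hx hy1 hy
  -- `hx_lt` and `hy_lt` make the two recursive calls below decrease
  have hx_lt : x < op x y := h.lt_op hx1 hxN hy1 hy
  have hx_one := h.mem hx1 hx le_rfl Nat.one_le_two_pow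
  have hy_one := h.mem hy1 hy le_rfl Nat.one_le_two_pow
  induction z, hz1 using Nat.le_induction with
  | base => exact h.op_op_one hx1 hx hy1 hy
  | succ z hz1 ih =>
    have hyz := h.mem hy1 hy hz1 (by omega)
    have hxz := h.mem hx1 hx hz1 (by omega)
    have hy_lt : y < op y z := h.lt_op hy1 hyN hz1 (by omega)
    calc op x (op y (z + 1)) = op x (op (op y z) (op y 1)) := by
          rw [h.op_succ hy1 hy hz1 (by omega)]
      _ = op (op x (op y z)) (op x (op y 1)) :=
          h.self_distrib hx1 hx hyz.1 hyz.2 hy_one.1 hy_one.2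
      _ = op (op (op x y) (op x z)) (op (op x y) (op x 1)) := by
          rw [ih (by omega), h.op_op_one hx1 hx hy1 hy]
      _ = op (op x y) (op (op x z) (op x 1)) :=
          (h.self_distrib hxy.1 hxy.2 hxz.1 hxz.2 hx_one.1 hx_one.2).symm
      _ = op (op x y) (op x (z + 1)) := by
          rw [h.op_succ hx1 hx hz1 (by omega)]
termination_by (2 ^ n - x, 2 ^ n - y)

theorem injOn_op_one (h : IsLaverOp n op) : (Set.Icc 1 (2 ^ n)).InjOn (op · 1) := by
  have hone : ∀ c, 1 ≤ c → c ≤ 2 ^ n → op c 1 = if c = 2 ^ n then 1 else c + 1 := by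
    intro c hc1 hc
    split_ifs with hcN
    · rw [hcN, h.top_op_one]
    · exact h.op_one hc1 (lt_of_le_of_ne hc hcN)
  rintro a ⟨ha1, ha⟩ b ⟨hb1, hb⟩ (hab : op a 1 = op b 1)
  rw [hone a ha1 ha, hone b hb1 hb] at hab
  split_ifs at hab <;> omega

end IsLaverOp

def laverComp (n : ℕ) (op : ℕ → ℕ → ℕ) (p q : ℕ) : ℕ :=
  if q = 2 ^ n then p else op p (q + 1) - 1

theorem laverComp_top (n : ℕ) (op : ℕ → ℕ → ℕ) (x : ℕ) : laverComp n op x (2 ^ n) = x :=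
  if_pos rfl

namespace IsLaverOp

variable {n : ℕ} {op : ℕ → ℕ → ℕ} {x y z : ℕ}

theorem laverComp_mem (h : IsLaverOp n op) (hx1 : 1 ≤ x) (hx : x ≤ 2 ^ n) (hy1 : 1 ≤ y)
    (hy : y ≤ 2 ^ n) : 1 ≤ laverComp n op x y ∧ laverComp n op x y ≤ 2 ^ n := by
  unfold laverComp
  split_ifs with hyN
  · exact ⟨hx1, hx⟩
  · have := h.one_lt_op hx1 hx (y := y + 1) (by omega) (by omega)
    have := h.mem hx1 hx (y := y + 1) (by omega) (by omega)
    omega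

theorem laverComp_op_one (h : IsLaverOp n op) (hx1 : 1 ≤ x) (hx : x ≤ 2 ^ n) (hy1 : 1 ≤ y)
    (hy : y ≤ 2 ^ n) : op (laverComp n op x y) 1 = op x (op y 1) := by
  unfold laverComp
  split_ifs with hyN
  · rw [hyN, h.top_op_one]
  · have hyN : y < 2 ^ n := lt_of_le_of_ne hy hyN
    have := h.one_lt_op hx1 hx (y := y + 1) (by omega) (by omega)
    have := h.mem hx1 hx (y := y + 1) (by omega) (by omega)
    rw [h.op_one (by omega) (by omega), h.op_one hy1 hyN]
    omega

theorem op_laverComp (h : IsLaverOp n op) (hx1 : 1 ≤ x) (hx : x ≤ 2 ^ n) (hy1 : 1 ≤ y)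
    (hy : y ≤ 2 ^ n) (hz1 : 1 ≤ z) (hz : z ≤ 2 ^ n) :
    op (laverComp n op x y) z = op x (op y z) := by
  have hxy := h.laverComp_mem hx1 hx hy1 hy
  have hy_one := h.mem hy1 hy le_rfl Nat.one_le_two_pow
  induction z, hz1 using Nat.le_induction with
  | base => exact h.laverComp_op_one hx1 hx hy1 hy
  | succ z hz1 ih =>
    have hyz := h.mem hy1 hy hz1 (by omega)
    rw [h.op_succ hxy.1 hxy.2 hz1 (by omega), ih (by omega), h.laverComp_op_one hx1 hx hy1 hy,
      ← h.self_distrib hx1 hx hyz.1 hyz.2 hy_one.1 hy_one.2, ← h.op_succ hy1 hy hz1 (by omega)]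

theorem top_laverComp (h : IsLaverOp n op) (hx1 : 1 ≤ x) (hx : x ≤ 2 ^ n) :
    laverComp n op (2 ^ n) x = x := by
  unfold laverComp
  split_ifs with hxN
  · exact hxN.symm
  · rw [h.top_op (by omega) (by omega)]
    omega

end IsLaverOp

/-- There is a unique binary operation `∘` on `{1, …, 2^n}` with
`(x ∘ y) *_n z = x *_n (y *_n z)`, namely `p ∘_n q = p *_n (q+1) − 1` for `q < 2^n`
and `p ∘_n 2^n = p`; it is associative with two-sided neutral element `2^n`. -/
theorem laver_composition (n : ℕ) (op : ℕ → ℕ → ℕ) (h : IsLaverOp n op)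
    (comp : ℕ → ℕ → ℕ)
    (hcomp : ∀ p q, 1 ≤ p → p ≤ 2 ^ n → 1 ≤ q → q ≤ 2 ^ n →
      comp p q = if q = 2 ^ n then p else op p (q + 1) - 1) :
    (∀ p q, 1 ≤ p → p ≤ 2 ^ n → 1 ≤ q → q ≤ 2 ^ n →
      1 ≤ comp p q ∧ comp p q ≤ 2 ^ n) ∧
    (∀ x y z, 1 ≤ x → x ≤ 2 ^ n → 1 ≤ y → y ≤ 2 ^ n → 1 ≤ z → z ≤ 2 ^ n →
      op (comp x y) z = op x (op y z)) ∧
    (∀ comp' : ℕ → ℕ → ℕ,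
      (∀ p q, 1 ≤ p → p ≤ 2 ^ n → 1 ≤ q → q ≤ 2 ^ n →
        1 ≤ comp' p q ∧ comp' p q ≤ 2 ^ n) →
      (∀ x y z, 1 ≤ x → x ≤ 2 ^ n → 1 ≤ y → y ≤ 2 ^ n → 1 ≤ z → z ≤ 2 ^ n →
        op (comp' x y) z = op x (op y z)) →
      ∀ x y, 1 ≤ x → x ≤ 2 ^ n → 1 ≤ y → y ≤ 2 ^ n → comp' x y = comp x y) ∧
    (∀ x y z, 1 ≤ x → x ≤ 2 ^ n → 1 ≤ y → y ≤ 2 ^ n → 1 ≤ z → z ≤ 2 ^ n →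
      comp (comp x y) z = comp x (comp y z)) ∧
    (∀ x, 1 ≤ x → x ≤ 2 ^ n → comp x (2 ^ n) = x ∧ comp (2 ^ n) x = x) := by
  have hlaver : ∀ p q, 1 ≤ p → p ≤ 2 ^ n → 1 ≤ q → q ≤ 2 ^ n →
      comp p q = laverComp n op p q := hcomp
  have hmem : ∀ p q, 1 ≤ p → p ≤ 2 ^ n → 1 ≤ q → q ≤ 2 ^ n →
      1 ≤ comp p q ∧ comp p q ≤ 2 ^ n :=
    fun p q hp1 hp hq1 hq => hlaver p q hp1 hp hq1 hq ▸ h.laverComp_mem hp1 hp hq1 hq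
  have hop : ∀ x y z, 1 ≤ x → x ≤ 2 ^ n → 1 ≤ y → y ≤ 2 ^ n → 1 ≤ z → z ≤ 2 ^ n →
      op (comp x y) z = op x (op y z) := fun x y z hx1 hx hy1 hy hz1 hz =>
    hlaver x y hx1 hx hy1 hy ▸ h.op_laverComp hx1 hx hy1 hy hz1 hz
  have hone : 1 ∈ Set.Icc 1 (2 ^ n) := ⟨le_rfl, Nat.one_le_two_pow⟩
  have hmemIcc : ∀ p ∈ Set.Icc 1 (2 ^ n), ∀ q ∈ Set.Icc 1 (2 ^ n), comp p q ∈ Set.Icc 1 (2 ^ n) :=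
    fun p hp q hq => hmem p q hp.1 hp.2 hq.1 hq.2
  have hopIcc : ∀ x ∈ Set.Icc 1 (2 ^ n), ∀ y ∈ Set.Icc 1 (2 ^ n), ∀ z ∈ Set.Icc 1 (2 ^ n),
      op (comp x y) z = op x (op y z) :=
    fun x hx y hy z hz => hop x y z hx.1 hx.2 hy.1 hy.2 hz.1 hz.2
  refine ⟨hmem, hop, fun comp' hmem' hop' x y hx1 hx hy1 hy => ?_,
    fun x y z hx1 hx hy1 hy hz1 hz => ?_, fun x hx1 hx => ?_⟩
  · exact comp_eq_of_injOn_op h.injOn_op_one hone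
      (fun p hp q hq => hmem' p q hp.1 hp.2 hq.1 hq.2) hmemIcc
      (fun x hx y hy z hz => hop' x y z hx.1 hx.2 hy.1 hy.2 hz.1 hz.2) hopIcc ⟨hx1, hx⟩ ⟨hy1, hy⟩
  · exact comp_assoc_of_injOn_op h.injOn_op_one hone
      (fun z hz => h.mem hz.1 hz.2 le_rfl Nat.one_le_two_pow) hmemIcc hopIcc
      ⟨hx1, hx⟩ ⟨hy1, hy⟩ ⟨hz1, hz⟩
  · rw [hlaver x _ hx1 hx Nat.one_le_two_pow le_rfl,
      hlaver _ x Nat.one_le_two_pow le_rfl hx1 hx]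
    exact ⟨laverComp_top n op x, h.top_laverComp hx1 hx⟩
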